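/- arXiv:2206.12143 — 5 statements merged into one kernel-verified Lean document; each statement's English description precedes it below -/
import Mathlib

section
/- Let H be a finite-dimensional real inner product space and A : H → H a self-adjoint positive semidefinite linear operator. Suppose for τ > 0 and σ ≥ 1/2 a sequence (y^n) in H satisfies (y^{n+1} - y^n)/τ + A(σ y^{n+1} + (1-σ) y^n) = φ^n for all n. Then ⟨A y^{n+1}, y^{n+1}⟩ ≤ ⟨A y^0, y^0⟩ + (1/2) Σ_{k=0}^{n} τ ‖φ^k‖² for every n. -/
open scoped RealInnerProductSpace

lemma step0 {H : Type*} [NormedAddCommGroup H] [InnerProductSpace ℝ H]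
    (A : H →ₗ[ℝ] H) (hA : LinearMap.IsSymmetric A) (hApos : ∀ v : H, 0 ≤ ⟪A v, v⟫)
    (τ σ : ℝ) (hτ : 0 < τ) (hσ : 1/2 ≤ σ) (u v g : H)
    (heq : τ⁻¹ • (v - u) + A (σ • v + (1-σ) • u) = g) :
    ⟪A v, v⟫ ≤ ⟪A u, u⟫ + τ/2 * ‖g‖^2 := by
  have hsym : ⟪A u, v⟫ = ⟪A v, u⟫ := by
    rw [hA u v, real_inner_comm]
  have hd := hApos (v - u)
  rw [map_sub, inner_sub_left, inner_sub_right, inner_sub_right, hsym] at hd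
  have h1 : ⟪τ⁻¹ • (v - u) + A (σ • v + (1-σ) • u), v - u⟫ = ⟪g, v - u⟫ := by rw [heq]
  rw [inner_add_left, real_inner_smul_left, real_inner_self_eq_norm_sq, map_add,
    map_smul, map_smul, inner_add_left, real_inner_smul_left, real_inner_smul_left,
    inner_sub_right, inner_sub_right, hsym] at h1
  have h2 : ⟪g, v - u⟫ ≤ ‖g‖ * ‖v - u‖ := real_inner_le_norm _ _
  have hn : (0:ℝ) ≤ ‖v - u‖ := norm_nonneg _
  have hg : (0:ℝ) ≤ ‖g‖ := norm_nonneg _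
  have hinv : (0:ℝ) < τ⁻¹ := inv_pos.mpr hτ
  have hti : τ * τ⁻¹ = 1 := mul_inv_cancel₀ hτ.ne'
  nlinarith [sq_nonneg (τ * ‖g‖ - 2 * ‖v - u‖),
    mul_nonneg (by linarith : (0:ℝ) ≤ 2*σ - 1) hd,
    mul_pos hτ hinv, mul_nonneg hn hn, sq_nonneg (‖g‖ - ‖v-u‖),
    mul_le_mul_of_nonneg_left h2 hτ.le]

theorem stmt0 {H : Type*} [NormedAddCommGroup H] [InnerProductSpace ℝ H]
    [FiniteDimensional ℝ H]
    (A : H →ₗ[ℝ] H) (hA : LinearMap.IsSymmetric A) (hApos : ∀ v : H, 0 ≤ ⟪A v, v⟫)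
    (τ σ : ℝ) (hτ : 0 < τ) (hσ : 1/2 ≤ σ)
    (y φ : ℕ → H)
    (hscheme : ∀ n : ℕ,
      τ⁻¹ • (y (n+1) - y n) + A (σ • y (n+1) + (1-σ) • y n) = φ n) :
    ∀ n : ℕ, ⟪A (y (n+1)), y (n+1)⟫ ≤
      ⟪A (y 0), y 0⟫ + (1/2) * ∑ k ∈ Finset.range (n+1), τ * ‖φ k‖^2 := by
  intro n
  induction n with
  | zero =>
    have := step0 A hA hApos τ σ hτ hσ (y 0) (y 1) (φ 0) (hscheme 0)
    simpa using by linarith [this]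
  | succ n ih =>
    have hstep := step0 A hA hApos τ σ hτ hσ (y (n+1)) (y (n+2)) (φ (n+1)) (hscheme (n+1))
    rw [Finset.sum_range_succ]
    linarith
end

section
/- Let H, H_1, …, H_p be finite-dimensional real inner product spaces with Σ_{α=1}^p R_α* R_α = I, and A : H → H self-adjoint positive semidefinite. Define on 𝐇 = ⊕_α H_α the full block operator 𝐀 with blocks R_α A R_β* and the block-diagonal operator 𝐀_0 with blocks R_α A R_α* (zero off-diagonal). Then 𝐀_0 ≥ (1/p) 𝐀, i.e., ⟨𝐀_0 𝐯, 𝐯⟩ ≥ (1/p)⟨𝐀 𝐯, 𝐯⟩ for all 𝐯 ∈ 𝐇. -/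
/-!
Writing `x α = R α* (v α)`, both quadratic forms are forms of `A` on `H`:
`⟨𝐀 v, v⟩ = ⟪A (∑ α, x α), ∑ α, x α⟫` and `⟨𝐀₀ v, v⟩ = ∑ α, ⟪A (x α), x α⟫`.
For positive semidefinite `A` the polarised Cauchy–Schwarz bound
`2 ⟪A a, b⟫ ≤ ⟪A a, a⟫ + ⟪A b, b⟫` summed over all pairs gives the analogue of
`(∑ α, a α)² ≤ p ∑ α, (a α)²`.
-/

open scoped RealInnerProductSpace

namespace LinearMap

variable {H : Type*} [NormedAddCommGroup H] [InnerProductSpace ℝ H]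

theorem IsSymmetric.two_mul_inner_le {A : H →ₗ[ℝ] H} (hA : A.IsSymmetric)
    (hApos : ∀ u, 0 ≤ ⟪A u, u⟫) (a b : H) :
    2 * ⟪A a, b⟫ ≤ ⟪A a, a⟫ + ⟪A b, b⟫ := by
  have hsymm : ⟪A b, a⟫ = ⟪A a, b⟫ := by rw [hA, real_inner_comm]
  have hdiff : ⟪A (a - b), a - b⟫ = ⟪A a, a⟫ - 2 * ⟪A a, b⟫ + ⟪A b, b⟫ := by
    simp only [map_sub, inner_sub_left, inner_sub_right, hsymm]
    ring
  linarith [hApos (a - b)]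

theorem IsSymmetric.inner_map_sum_le_card_mul_sum {ι : Type*} [Fintype ι] {A : H →ₗ[ℝ] H}
    (hA : A.IsSymmetric) (hApos : ∀ u, 0 ≤ ⟪A u, u⟫) (x : ι → H) :
    ⟪A (∑ i, x i), ∑ i, x i⟫ ≤ Fintype.card ι * ∑ i, ⟪A (x i), x i⟫ := by
  calc ⟪A (∑ i, x i), ∑ i, x i⟫
      = ∑ j, ∑ i, ⟪A (x i), x j⟫ := by
        simp only [map_sum, sum_inner, inner_sum]
    _ ≤ ∑ j, ∑ i, (⟪A (x i), x i⟫ + ⟪A (x j), x j⟫) / 2 := by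
        gcongr with j _ i _
        linarith [hA.two_mul_inner_le hApos (x i) (x j)]
    _ = Fintype.card ι * ∑ i, ⟪A (x i), x i⟫ := by
        simp only [add_div, Finset.sum_add_distrib, Finset.sum_const, Finset.card_univ,
          nsmul_eq_mul, ← Finset.sum_div, ← Finset.mul_sum]
        ring

variable [FiniteDimensional ℝ H] {ι : Type*} [Fintype ι] {Hs : ι → Type*}
  [∀ i, NormedAddCommGroup (Hs i)] [∀ i, InnerProductSpace ℝ (Hs i)]
  [∀ i, FiniteDimensional ℝ (Hs i)]

theorem sum_inner_sum_map_adjoint (R : ∀ i, H →ₗ[ℝ] Hs i) (A : H →ₗ[ℝ] H) (v : ∀ i, Hs i) :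
    ∑ i, ⟪∑ j, R i (A (adjoint (R j) (v j))), v i⟫
      = ⟪A (∑ j, adjoint (R j) (v j)), ∑ i, adjoint (R i) (v i)⟫ := by
  rw [inner_sum]
  refine Finset.sum_congr rfl fun i _ => ?_
  rw [adjoint_inner_right, map_sum, map_sum]

end LinearMap

open LinearMap in
theorem stmt6_general {H : Type*} [NormedAddCommGroup H] [InnerProductSpace ℝ H]
    [FiniteDimensional ℝ H]
    {p : ℕ} {Hs : Fin p → Type*}
    [∀ α, NormedAddCommGroup (Hs α)] [∀ α, InnerProductSpace ℝ (Hs α)]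
    [∀ α, FiniteDimensional ℝ (Hs α)]
    (R : ∀ α, H →ₗ[ℝ] Hs α)
    (A : H →ₗ[ℝ] H) (hA : LinearMap.IsSymmetric A) (hApos : ∀ u : H, 0 ≤ ⟪A u, u⟫) :
    ∀ v : ∀ α, Hs α,
      (1 / (p : ℝ)) * ∑ α, ⟪∑ β, R α (A ((LinearMap.adjoint (R β)) (v β))), v α⟫
        ≤ ∑ α, ⟪R α (A ((LinearMap.adjoint (R α)) (v α))), v α⟫ := by
  intro v
  have hdiag : ∀ α, ⟪R α (A (adjoint (R α) (v α))), v α⟫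
      = ⟪A (adjoint (R α) (v α)), adjoint (R α) (v α)⟫ :=
    fun α => (adjoint_inner_right _ _ _).symm
  have hbound := hA.inner_map_sum_le_card_mul_sum hApos fun α => adjoint (R α) (v α)
  rw [Fintype.card_fin] at hbound
  rw [sum_inner_sum_map_adjoint, Finset.sum_congr rfl fun α _ => hdiag α, one_div_mul_eq_div]
  exact div_le_of_le_mul₀ p.cast_nonneg
    (Finset.sum_nonneg fun α _ => hApos _) (mul_comm (p : ℝ) _ ▸ hbound)

/-- 𝐀₀ ≥ (1/p) 𝐀 for the block-diagonal part of the block operator. -/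
theorem stmt6 {H : Type*} [NormedAddCommGroup H] [InnerProductSpace ℝ H]
    [FiniteDimensional ℝ H]
    {p : ℕ} (hp : 0 < p) {Hs : Fin p → Type*}
    [∀ α, NormedAddCommGroup (Hs α)] [∀ α, InnerProductSpace ℝ (Hs α)]
    [∀ α, FiniteDimensional ℝ (Hs α)]
    (R : ∀ α, H →ₗ[ℝ] Hs α)
    (hR : ∑ α, (LinearMap.adjoint (R α)) ∘ₗ (R α) = LinearMap.id)
    (A : H →ₗ[ℝ] H) (hA : LinearMap.IsSymmetric A) (hApos : ∀ u : H, 0 ≤ ⟪A u, u⟫) :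
    ∀ v : ∀ α, Hs α,
      (1 / (p : ℝ)) * ∑ α, ⟪∑ β, R α (A ((LinearMap.adjoint (R β)) (v β))), v α⟫
        ≤ ∑ α, ⟪R α (A ((LinearMap.adjoint (R α)) (v α))), v α⟫ :=
  stmt6_general R A hA hApos
end

section
/- Let 𝐇 be a finite-dimensional real inner product space, 𝐀_1, 𝐀_2 with 𝐀_1* = 𝐀_2 and 𝐀 = 𝐀_1 + 𝐀_2 self-adjoint positive semidefinite, τ > 0. If a sequence (𝐰^n) satisfies (𝐈 + 0.5τ𝐀_1)(𝐈 + 0.5τ𝐀_2)(𝐰^{n+1} − 𝐰^n)/τ + 𝐀𝐰^n = 𝛗^{n+1/2} for all n, then ⟨𝐀𝐰^{n+1}, 𝐰^{n+1}⟩ ≤ ⟨𝐀𝐰^0, 𝐰^0⟩ + (1/2)Σ_{k=0}^n τ‖𝛗^{k+1/2}‖². -/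
open scoped RealInnerProductSpace

/-- Unconditional stability of the alternating-triangular (factorized) scheme.
`φ n` plays the role of 𝛗^{n+1/2}. -/
theorem stmt10 {H : Type*} [NormedAddCommGroup H] [InnerProductSpace ℝ H]
    [FiniteDimensional ℝ H]
    (A1 A2 A : H →ₗ[ℝ] H) (hadj : LinearMap.adjoint A1 = A2) (hA : A = A1 + A2)
    (hAsym : LinearMap.IsSymmetric A) (hApos : ∀ v : H, 0 ≤ ⟪A v, v⟫)
    (τ : ℝ) (hτ : 0 < τ)
    (w φ : ℕ → H)
    (hscheme : ∀ n : ℕ,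
      ((LinearMap.id : H →ₗ[ℝ] H) + (τ/2) • A1)
          (((LinearMap.id : H →ₗ[ℝ] H) + (τ/2) • A2) (τ⁻¹ • (w (n+1) - w n)))
        + A (w n) = φ n) :
    ∀ n : ℕ, ⟪A (w (n+1)), w (n+1)⟫ ≤
      ⟪A (w 0), w 0⟫ + (1/2) * ∑ k ∈ Finset.range (n+1), τ * ‖φ k‖^2 := by
  have hA1 : ∀ x y : H, ⟪A1 x, y⟫ = ⟪x, A2 y⟫ := by
    intro x y
    rw [← hadj]; exact (LinearMap.adjoint_inner_right A1 x y).symm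
  have hstep : ∀ n : ℕ, ⟪A (w (n+1)), w (n+1)⟫ ≤
      ⟪A (w n), w n⟫ + (1/2) * (τ * ‖φ n‖^2) := by
    intro n
    set d := w (n+1) - w n with hd
    have hw1 : w (n+1) = w n + d := by rw [hd]; abel
    have h1 : ⟪((LinearMap.id : H →ₗ[ℝ] H) + (τ/2) • A1)
          (((LinearMap.id : H →ₗ[ℝ] H) + (τ/2) • A2) (τ⁻¹ • d))
        + A (w n), d⟫ = ⟪φ n, d⟫ := by rw [hscheme n]
    simp only [LinearMap.add_apply, LinearMap.smul_apply, LinearMap.id_apply, map_add,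
      map_smul, smul_smul, inner_add_left, real_inner_smul_left] at h1
    -- rewrite adjoint terms
    have h12 : ⟪A1 (A2 d), d⟫ = ‖A2 d‖^2 := by
      rw [hA1, real_inner_self_eq_norm_sq]
    have h11 : ⟪A1 d, d⟫ + ⟪A2 d, d⟫ = ⟪A d, d⟫ := by
      rw [hA, LinearMap.add_apply, inner_add_left]
    have hE : ⟪A (w (n+1)), w (n+1)⟫ =
        ⟪A (w n), w n⟫ + 2 * ⟪A (w n), d⟫ + ⟪A d, d⟫ := by
      rw [hw1, map_add, inner_add_left, inner_add_right, inner_add_right]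
      have : ⟪A d, w n⟫ = ⟪A (w n), d⟫ := by
        rw [hAsym d (w n), real_inner_comm]
      rw [this]; ring
    have hcs : ⟪φ n, d⟫ ≤ ‖φ n‖ * ‖d‖ := real_inner_le_norm _ _
    have hdd : ⟪d, d⟫ = ‖d‖^2 := real_inner_self_eq_norm_sq d
    have hτ1 : τ * τ⁻¹ = 1 := mul_inv_cancel₀ hτ.ne'
    have hA2d : (0:ℝ) ≤ ‖A2 d‖^2 := sq_nonneg _
    have h1τ : ‖d‖^2 + (τ/2)*⟪A d, d⟫ + (τ^2/4)*‖A2 d‖^2 + τ*⟪A (w n), d⟫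
        = τ*⟪φ n, d⟫ := by
      linear_combination τ * h1 +
        (-(⟪d, d⟫ + τ/2*⟪A1 d, d⟫ + τ/2*⟪A2 d, d⟫ + τ^2/4*⟪A1 (A2 d), d⟫)) * hτ1
        - hdd - (τ/2) * h11 - (τ^2/4) * h12
    rw [hE]
    nlinarith [sq_nonneg (τ * ‖φ n‖ - 2 * ‖d‖), mul_le_mul_of_nonneg_left hcs hτ.le,
      mul_pos hτ hτ, sq_nonneg ‖d‖, mul_nonneg hτ.le hA2d, h1τ, hτ]
  intro n
  induction n with
  | zero => simpa using hstep 0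
  | succ m ih =>
      have := hstep (m+1)
      rw [Finset.sum_range_succ]
      linarith
end

section
/- Let 𝐇 be a finite-dimensional real inner product space, A self-adjoint positive semidefinite, D self-adjoint positive semidefinite, τ > 0. Suppose sequences (s^n), (r^n), (φ^n) in 𝐇 satisfy (r^{n+1} + r^n)/2 + D(r^{n+1} − r^n)/τ + A(s^{n+1} + s^n)/2 = φ^n and s^{n+1} − s^n = (τ/2)(r^{n+1} + r^n) for all n ≥ 1. Then for every n ≥ 1: ⟨D r^{n+1}, r^{n+1}⟩ + ⟨A s^{n+1}, s^{n+1}⟩ ≤ ⟨D r^1, r^1⟩ + ⟨A s^1, s^1⟩ + (1/2)Σ_{k=1}^n τ‖φ^k‖². -/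
open scoped RealInnerProductSpace

lemma symm_diff_sum {H : Type*} [NormedAddCommGroup H] [InnerProductSpace ℝ H]
    (T : H →ₗ[ℝ] H) (hT : LinearMap.IsSymmetric T) (a b : H) :
    ⟪T (a - b), a + b⟫ = ⟪T a, a⟫ - ⟪T b, b⟫ := by
  have h : ⟪T a, b⟫ = ⟪T b, a⟫ := (hT a b).trans (real_inner_comm (T b) a)
  simp only [map_sub, inner_sub_left, inner_add_right]
  linarith

lemma symm_sum_diff {H : Type*} [NormedAddCommGroup H] [InnerProductSpace ℝ H]
    (T : H →ₗ[ℝ] H) (hT : LinearMap.IsSymmetric T) (a b : H) :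
    ⟪T (a + b), a - b⟫ = ⟪T a, a⟫ - ⟪T b, b⟫ := by
  have h : ⟪T a, b⟫ = ⟪T b, a⟫ := (hT a b).trans (real_inner_comm (T b) a)
  simp only [map_add, inner_add_left, inner_sub_right]
  linarith

/-- Energy estimate for the canonical form of the three-level scheme. -/
theorem stmt12 {H : Type*} [NormedAddCommGroup H] [InnerProductSpace ℝ H]
    [FiniteDimensional ℝ H]
    (A D : H →ₗ[ℝ] H)
    (hA : LinearMap.IsSymmetric A) (hApos : ∀ v : H, 0 ≤ ⟪A v, v⟫)
    (hD : LinearMap.IsSymmetric D) (hDpos : ∀ v : H, 0 ≤ ⟪D v, v⟫)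
    (τ : ℝ) (hτ : 0 < τ)
    (s r φ : ℕ → H)
    (hscheme : ∀ n : ℕ, 1 ≤ n →
      (1/2 : ℝ) • (r (n+1) + r n) + D (τ⁻¹ • (r (n+1) - r n))
        + A ((1/2 : ℝ) • (s (n+1) + s n)) = φ n)
    (hsr : ∀ n : ℕ, 1 ≤ n → s (n+1) - s n = (τ/2) • (r (n+1) + r n)) :
    ∀ n : ℕ, 1 ≤ n →
      ⟪D (r (n+1)), r (n+1)⟫ + ⟪A (s (n+1)), s (n+1)⟫ ≤
        ⟪D (r 1), r 1⟫ + ⟪A (s 1), s 1⟫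
          + (1/2) * ∑ k ∈ Finset.Icc 1 n, τ * ‖φ k‖^2 := by
  have key : ∀ k : ℕ, 1 ≤ k →
      ⟪D (r (k+1)), r (k+1)⟫ + ⟪A (s (k+1)), s (k+1)⟫ ≤
        ⟪D (r k), r k⟫ + ⟪A (s k), s k⟫ + (1/2) * (τ * ‖φ k‖^2) := by
    intro k hk
    set w := r (k+1) + r k with hw
    have h1 : ⟪(1/2 : ℝ) • w + D (τ⁻¹ • (r (k+1) - r k))
        + A ((1/2 : ℝ) • (s (k+1) + s k)), w⟫ = ⟪φ k, w⟫ := by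
      rw [hscheme k hk]
    have hDdiff : ⟪D (r (k+1) - r k), w⟫ = ⟪D (r (k+1)), r (k+1)⟫ - ⟪D (r k), r k⟫ :=
      symm_diff_sum D hD _ _
    have hAdiff : ⟪A (s (k+1) + s k), s (k+1) - s k⟫
        = ⟪A (s (k+1)), s (k+1)⟫ - ⟪A (s k), s k⟫ := symm_sum_diff A hA _ _
    rw [hsr k hk, real_inner_smul_right, ← hw] at hAdiff
    rw [inner_add_left, inner_add_left, real_inner_smul_left, map_smul,
      real_inner_smul_left, map_smul, real_inner_smul_left, hDdiff] at h1
    set X : ℝ := ⟪A (s (k+1) + s k), w⟫ with hXdef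
    have hwsq : ⟪w, w⟫ = ‖w‖^2 := real_inner_self_eq_norm_sq w
    have hyoung : ⟪φ k, w⟫ ≤ ‖φ k‖ * ‖w‖ := real_inner_le_norm _ _
    have hsq : (0:ℝ) ≤ (‖w‖ - ‖φ k‖)^2 := sq_nonneg _
    have hτ0 : τ ≠ 0 := ne_of_gt hτ
    have hτi : τ⁻¹ = 1/τ := (one_div τ).symm
    rw [hτi] at h1
    have hX : (1/τ) * (⟪A (s (k+1)), s (k+1)⟫ - ⟪A (s k), s k⟫) = (1/2) * X := by
      rw [← hAdiff]; field_simp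
    have h2 : (1/τ) * (⟪D (r (k+1)), r (k+1)⟫ - ⟪D (r k), r k⟫
        + (⟪A (s (k+1)), s (k+1)⟫ - ⟪A (s k), s k⟫)) ≤ (1/2) * ‖φ k‖^2 := by
      nlinarith [h1, hX, hwsq, hyoung, hsq]
    have h3 := mul_le_mul_of_nonneg_left h2 hτ.le
    rw [← mul_assoc, mul_one_div_cancel hτ0, one_mul] at h3
    nlinarith [h3]
  intro n hn
  induction n, hn using Nat.le_induction with
  | base =>
      have := key 1 le_rfl
      simp only [Finset.Icc_self, Finset.sum_singleton] at *
      linarith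
  | succ n hn ih =>
      have hstep := key (n+1) (by omega)
      have hsum : ∑ k ∈ Finset.Icc 1 (n+1), τ * ‖φ k‖^2
          = (∑ k ∈ Finset.Icc 1 n, τ * ‖φ k‖^2) + τ * ‖φ (n+1)‖^2 := by
        rw [Finset.sum_Icc_succ_top (by omega)]
      rw [hsum]
      linarith
end

section
/- Let 𝐇 be a finite-dimensional real inner product space, 𝐀 = 𝐀* ≥ 0, 𝐀_0 = 𝐀_0* with 𝐀_0 ≥ (1/p)𝐀, σ ≥ p/4, τ > 0. If a sequence (𝐰^n) satisfies (𝐰^{n+1} − 𝐰^{n-1})/(2τ) + 𝐀_0(σ𝐰^{n+1} + (1−2σ)𝐰^n + σ𝐰^{n-1}) + (𝐀 − 𝐀_0)𝐰^n = 𝛗^n for n ≥ 1, then with s^n = (𝐰^n + 𝐰^{n-1})/2, r^n = (𝐰^n − 𝐰^{n-1})/τ, and 𝐂 = στ²𝐀_0 − (τ²/4)𝐀, one has ⟨𝐂 r^{n+1}, r^{n+1}⟩ + ⟨𝐀 s^{n+1}, s^{n+1}⟩ ≤ ⟨𝐂 r^1, r^1⟩ + ⟨𝐀 s^1, s^1⟩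 + (1/2)Σ_{k=1}^n τ‖𝛗^k‖² for all n ≥ 1. -/
open scoped RealInnerProductSpace

/-- Stability of the three-level explicit-implicit domain-decomposition scheme. -/
theorem stmt14 {H : Type*} [NormedAddCommGroup H] [InnerProductSpace ℝ H]
    [FiniteDimensional ℝ H]
    (A A0 : H →ₗ[ℝ] H)
    (hA : LinearMap.IsSymmetric A) (hApos : ∀ v : H, 0 ≤ ⟪A v, v⟫)
    (hA0 : LinearMap.IsSymmetric A0)
    (p : ℝ) (hp : 1 ≤ p)
    (hA0A : ∀ v : H, (1 / p) * ⟪A v, v⟫ ≤ ⟪A0 v, v⟫)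
    (σ τ : ℝ) (hσ : p / 4 ≤ σ) (hτ : 0 < τ)
    (w φ : ℕ → H)
    (hscheme : ∀ n : ℕ, 1 ≤ n →
      (2*τ)⁻¹ • (w (n+1) - w (n-1))
        + A0 (σ • w (n+1) + (1 - 2*σ) • w n + σ • w (n-1))
        + (A - A0) (w n) = φ n)
    (s r : ℕ → H)
    (hs : ∀ n : ℕ, 1 ≤ n → s n = (1/2 : ℝ) • (w n + w (n-1)))
    (hr : ∀ n : ℕ, 1 ≤ n → r n = τ⁻¹ • (w n - w (n-1)))
    (C : H →ₗ[ℝ] H) (hC : C = (σ * τ^2) • A0 - (τ^2/4) • A) :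
    ∀ n : ℕ, 1 ≤ n →
      ⟪C (r (n+1)), r (n+1)⟫ + ⟪A (s (n+1)), s (n+1)⟫ ≤
        ⟪C (r 1), r 1⟫ + ⟪A (s 1), s 1⟫
          + (1/2) * ∑ k ∈ Finset.Icc 1 n, τ * ‖φ k‖^2 := by
  have hτ' : (τ : ℝ) ≠ 0 := ne_of_gt hτ
  have hCsym : LinearMap.IsSymmetric C := by
    rw [hC]; intro x y
    simp only [LinearMap.sub_apply, LinearMap.smul_apply, inner_sub_left, inner_sub_right,
      real_inner_smul_left, real_inner_smul_right, hA x y, hA0 x y]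
  have key : ∀ n : ℕ, 1 ≤ n →
      ⟪C (r (n+1)), r (n+1)⟫ + ⟪A (s (n+1)), s (n+1)⟫ ≤
      ⟪C (r n), r n⟫ + ⟪A (s n), s n⟫ + (1/2) * (τ * ‖φ n‖^2) := by
    intro n hn
    have hn1 : 1 ≤ n + 1 := by omega
    have hrn1 : r (n+1) = τ⁻¹ • (w (n+1) - w n) := by
      have := hr (n+1) hn1; simpa using this
    have hrn : r n = τ⁻¹ • (w n - w (n-1)) := hr n hn
    have hsn1 : s (n+1) = (1/2 : ℝ) • (w (n+1) + w n) := by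
      have := hs (n+1) hn1; simpa using this
    have hsn : s n = (1/2 : ℝ) • (w n + w (n-1)) := hs n hn
    set u := r (n+1) + r n with hu
    set v := r (n+1) - r n with hv
    -- rewritten scheme
    have heq : (1/2 : ℝ) • u + τ⁻¹ • C v + (1/2 : ℝ) • A (s (n+1) + s n) = φ n := by
      rw [← hscheme n hn]
      simp only [hu, hv, hrn1, hrn, hsn1, hsn, hC, LinearMap.sub_apply, LinearMap.smul_apply,
        map_add, map_sub, map_smul, smul_add, smul_sub, smul_smul]
      match_scalars <;> field_simp <;> (first | ring1 | exact Or.inl (by ring))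
    have hsd : s (n+1) - s n = (τ/2 : ℝ) • u := by
      rw [hsn1, hsn, hu, hrn1, hrn]
      match_scalars <;> field_simp <;> (first | ring1 | exact Or.inl (by ring))
    -- inner product with τ • u
    have hip : (τ/2) * ⟪u, u⟫ + ⟪C v, u⟫ + (τ/2) * ⟪A (s (n+1) + s n), u⟫
        = τ * ⟪φ n, u⟫ := by
      have h := congrArg (fun x => ⟪x, τ • u⟫) heq
      simp only [inner_add_left, real_inner_smul_left, real_inner_smul_right] at h
      rw [← h]; field_simp; try ring
    have hCv : ⟪C v, u⟫ = ⟪C (r (n+1)), r (n+1)⟫ - ⟪C (r n), r n⟫ := by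
      rw [hv, hu, map_sub]
      simp only [inner_sub_left, inner_add_right]
      have h1 : ⟪C (r (n+1)), r n⟫ = ⟪C (r n), r (n+1)⟫ := by
        rw [hCsym (r (n+1)) (r n), real_inner_comm]
      linarith [h1]
    have hAs : (τ/2) * ⟪A (s (n+1) + s n), u⟫
        = ⟪A (s (n+1)), s (n+1)⟫ - ⟪A (s n), s n⟫ := by
      have h2 : ⟪A (s (n+1) + s n), s (n+1) - s n⟫
          = ⟪A (s (n+1)), s (n+1)⟫ - ⟪A (s n), s n⟫ := by
        rw [map_add]
        simp only [inner_add_left, inner_sub_right]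
        have h1 : ⟪A (s (n+1)), s n⟫ = ⟪A (s n), s (n+1)⟫ := by
          rw [hA (s (n+1)) (s n), real_inner_comm]
        linarith [h1]
      rw [← h2, hsd, real_inner_smul_right]
    have hbound : τ * ⟪φ n, u⟫ ≤ (τ/2) * ‖φ n‖^2 + (τ/2) * ‖u‖^2 := by
      have h1 : ⟪φ n, u⟫ ≤ ‖φ n‖ * ‖u‖ := real_inner_le_norm _ _
      nlinarith [sq_nonneg (‖φ n‖ - ‖u‖), hτ.le]
    have huu : ⟪u, u⟫ = ‖u‖^2 := real_inner_self_eq_norm_sq u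
    rw [huu] at hip
    linarith [hip, hCv, hAs, hbound]
  intro n hn
  induction n with
  | zero => omega
  | succ m ih =>
    rcases Nat.lt_or_ge m 1 with hm | hm
    · interval_cases m
      simpa using key 1 le_rfl
    · have hsum : ∑ k ∈ Finset.Icc 1 (m+1), τ * ‖φ k‖^2
          = (∑ k ∈ Finset.Icc 1 m, τ * ‖φ k‖^2) + τ * ‖φ (m+1)‖^2 := by
        rw [← Finset.sum_Icc_succ_top (by omega : 1 ≤ m + 1)]
      have h1 := key (m+1) (by omega)
      have h2 := ih hm
      rw [hsum]
      linarith
end
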